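/- Let (X,d) be a metric space, (A_n) a sequence of closed subsets converging in Hausdorff distance to a closed set A_∞, and μ a Borel measure on X with μ(⋃_{n=1}^∞ A_n) < ∞. Then μ(A_∞) ≥ limsup_{n→∞} μ(A_n). -/

import Mathlib

/-!
Hausdorff convergence puts `A n` eventually inside every closed thickening `cthickening δ A_∞`,
so the limsup is at most the measure of each thickening, computed in `μ` restricted to `⋃ n, A n`,
a finite measure. As `δ → 0` these thickenings decrease to the closed set `A_∞`, and continuity
from above gives the bound.
-/

open Metric Set Filter Topology MeasureTheory

theorem eventually_subset_cthickening_of_tendsto_hausdorffEDist {X ι : Type*}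
    [PseudoEMetricSpace X] {l : Filter ι} {A : ι → Set X} {s : Set X}
    (h : Tendsto (fun i => hausdorffEDist (A i) s) l (𝓝 0)) {δ : ℝ} (hδ : 0 < δ) :
    ∀ᶠ i in l, A i ⊆ cthickening δ s := by
  filter_upwards [h.eventually (gt_mem_nhds (ENNReal.ofReal_pos.2 hδ))] with i hi x hx
  exact mem_cthickening_iff.2 ((infEDist_le_hausdorffEDist_of_mem hx).trans hi.le)

theorem limsup_measure_le_of_eventually_subset_cthickening {X ι : Type*}
    [PseudoMetricSpace X] [MeasurableSpace X] [OpensMeasurableSpace X]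
    {l : Filter ι} {A : ι → Set X} {s : Set X} (hs : IsClosed s)
    (hA : ∀ δ > 0, ∀ᶠ i in l, A i ⊆ cthickening δ s) (μ : Measure X) [IsFiniteMeasure μ] :
    limsup (fun i => μ (A i)) l ≤ μ s := by
  have hlim : Tendsto (fun δ => μ (cthickening δ s)) (𝓝[>] 0) (𝓝 (μ s)) :=
    (tendsto_measure_cthickening_of_isClosed ⟨1, one_pos, measure_ne_top μ _⟩ hs).mono_left
      nhdsWithin_le_nhds
  refine ge_of_tendsto hlim (eventually_nhdsWithin_of_forall fun δ hδ => ?_)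
  exact limsup_le_of_le (by isBoundedDefault) ((hA δ hδ).mono fun i hi => measure_mono hi)

theorem measure_limsup_le_of_hausdorff_tendsto_general {X : Type*} [MetricSpace X]
    [MeasurableSpace X] [BorelSpace X]
    (A : ℕ → Set X) (Alim : Set X)
    (hAlimcl : IsClosed Alim)
    (hconv : Tendsto (fun n => EMetric.hausdorffEdist (A n) Alim) atTop (𝓝 0))
    (μ : Measure X) (hfin : μ (⋃ n, A n) < ⊤) :
    Filter.limsup (fun n => μ (A n)) atTop ≤ μ Alim := by
  have : IsFiniteMeasure (μ.restrict (⋃ n, A n)) := isFiniteMeasure_restrict.2 hfin.ne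
  have hrestrict : ∀ n, μ (A n) = μ.restrict (⋃ n, A n) (A n) := fun n =>
    (Measure.restrict_eq_self μ (subset_iUnion A n)).symm
  calc limsup (fun n => μ (A n)) atTop
      = limsup (fun n => μ.restrict (⋃ n, A n) (A n)) atTop := by simp_rw [← hrestrict]
    _ ≤ μ.restrict (⋃ n, A n) Alim :=
      limsup_measure_le_of_eventually_subset_cthickening hAlimcl
        (fun _ hδ => eventually_subset_cthickening_of_tendsto_hausdorffEDist hconv hδ) _
    _ ≤ μ Alim := Measure.restrict_apply_le _ _

theorem measure_limsup_le_of_hausdorff_tendsto {X : Type*} [MetricSpace X]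
    [MeasurableSpace X] [BorelSpace X]
    (A : ℕ → Set X) (Alim : Set X)
    (hAcl : ∀ n, IsClosed (A n)) (hAlimcl : IsClosed Alim)
    (hconv : Tendsto (fun n => EMetric.hausdorffEdist (A n) Alim) atTop (𝓝 0))
    (μ : Measure X) (hfin : μ (⋃ n, A n) < ⊤) :
    Filter.limsup (fun n => μ (A n)) atTop ≤ μ Alim :=
  measure_limsup_le_of_hausdorff_tendsto_general A Alim hAlimcl hconv μ hfin
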